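/- Game characterisation of generic bisimilarity: for all x, y ∈ {o,b} and all states s, t, we have s ≈_{(x,y)} t if and only if s ≡_{E(x,y)} t. -/

import Mathlib

namespace GamesBisim

/-- Parameter values `o` (ordinary) and `b` (branching) for generic bisimulations. -/
inductive XY | o | b
deriving DecidableEq

/-- The faces ☹ (frown) and ☺ (smile). -/
inductive Face | frown | smile
deriving DecidableEq

/-- Rewards: `*` (star) and `✓` (check). -/
inductive Rw | star | check
deriving DecidableEq

/-- A labelled transition system with states `S`, actions `A` containing a
distinguished silent action `tau`, and a transition relation. -/
structure LTS (S : Type u) (A : Type v) where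
  tau : A
  Trans : S → A → S → Prop

namespace LTS

variable {S : Type u} {A : Type v}

/-- A single silent (τ) step. -/
def TauStep (L : LTS S A) (s s' : S) : Prop := L.Trans s L.tau s'

/-- `↠`: the reflexive-transitive closure of the τ-step relation. -/
def TauStar (L : LTS S A) : S → S → Prop := Relation.ReflTransGen L.TauStep

/-- `↠⁺`: the transitive closure of the τ-step relation. -/
def TauPlus (L : LTS S A) : S → S → Prop := Relation.TransGen L.TauStep

/-- An LTS is non-divergent if it admits no infinite sequence of τ-steps. -/
def NonDivergent (L : LTS S A) : Prop :=
  ¬ ∃ f : ℕ → S, ∀ i, L.TauStep (f i) (f (i + 1))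

/-- A symmetric relation `R` is a branching bisimulation. -/
def IsBranchingBisim (L : LTS S A) (R : S → S → Prop) : Prop :=
  (∀ s t, R s t → R t s) ∧
  ∀ s t a s', R s t → L.Trans s a s' →
    (a = L.tau ∧ R s' t) ∨
    ∃ t1 t', L.TauStar t t1 ∧ L.Trans t1 a t' ∧ R s t1 ∧ R s' t'

/-- Branching bisimilarity `≈b`. -/
def BranchingBisimilar (L : LTS S A) (s t : S) : Prop :=
  ∃ R, L.IsBranchingBisim R ∧ R s t

/-- A symmetric relation `R` is a delay bisimulation. -/
def IsDelayBisim (L : LTS S A) (R : S → S → Prop) : Prop :=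
  (∀ s t, R s t → R t s) ∧
  ∀ s t a s', R s t → L.Trans s a s' →
    (a = L.tau ∧ R s' t) ∨
    ∃ t1 t', L.TauStar t t1 ∧ L.Trans t1 a t' ∧ R s' t'

/-- The generalised weak transition `s ↠_{x,R,t} s'`: a weak transition `s ↠ s'`,
which in case `x = b` additionally satisfies `t R s` and `t R s'`. -/
def GenTauStar (L : LTS S A) (x : XY) (R : S → S → Prop) (t : S) (s s' : S) : Prop :=
  L.TauStar s s' ∧ (x = XY.b → R t s ∧ R t s')

/-- The strong generalised weak transition `s ⟹_{x,R,t} s'`: a weak transition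
`s ↠ s'`, which in case `x = b` is witnessed by a finite τ-path all of whose states
are related to `t` by `R`. -/
def SGenTauStar (L : LTS S A) (x : XY) (R : S → S → Prop) (t : S) (s s' : S) : Prop :=
  L.TauStar s s' ∧
  (x = XY.b → R t s ∧ Relation.ReflTransGen (fun u u' => L.TauStep u u' ∧ R t u') s s')

/-- A symmetric relation `R` is an `(x,y)`-generic bisimulation. -/
def IsGenBisim (L : LTS S A) (x y : XY) (R : S → S → Prop) : Prop :=
  (∀ s t, R s t → R t s) ∧
  ∀ s t a s', R s t → L.Trans s a s' →
    (a = L.tau ∧ R s' t) ∨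
    ∃ t1 t2 t', L.GenTauStar x R s t t1 ∧ L.Trans t1 a t2 ∧
      L.GenTauStar y R s' t2 t' ∧ R s' t'

/-- `(x,y)`-generic bisimilarity `≈_{(x,y)}`. -/
def GenBisimilar (L : LTS S A) (x y : XY) (s t : S) : Prop :=
  ∃ R, L.IsGenBisim x y R ∧ R s t

/-- A symmetric relation `R` is an `(x,y)`-generic bisimulation with explicit
divergence (divergence condition D₄). -/
def IsGenBisimED (L : LTS S A) (x y : XY) (R : S → S → Prop) : Prop :=
  L.IsGenBisim x y R ∧
  ∀ s t, R s t → ∀ f : ℕ → S, f 0 = s → (∀ i, L.TauStep (f i) (f (i + 1))) →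
    ∃ t' k, L.TauPlus t t' ∧ R (f k) t'

/-- `(x,y)`-generic bisimilarity with explicit divergence `≈ed_{(x,y)}`. -/
def GenBisimilarED (L : LTS S A) (x y : XY) (s t : S) : Prop :=
  ∃ R, L.IsGenBisimED x y R ∧ R s t

end LTS

/-- A relation `R` has the stuttering property: whenever
`t₀ →τ t₁ →τ ⋯ →τ t_k` and `t₀ R t_k`, then `t_i R t_j` for all `0 ≤ i,j ≤ k`. -/
def StutteringProperty {S : Type u} {A : Type v} (L : LTS S A) (R : S → S → Prop) : Prop :=
  ∀ (k : ℕ) (t : ℕ → S),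
    (∀ i < k, L.TauStep (t i) (t (i + 1))) → R (t 0) (t k) →
    ∀ i j, i ≤ k → j ≤ k → R (t i) (t j)

/-! ## Two-player games

A play is a maximal (finite or infinite) sequence of configurations connected by
moves, represented as `π : ℕ → Option C` which is `none` from the point (if any)
where the play has ended; a play may only end in a configuration whose owner is
stuck. A strategy for a player is a (positional) function `σ : C → C` which is
required to pick a legal move at every configuration owned by that player admitting
at least one move; a play is consistent with `σ` if every move taken from a
configuration owned by that player follows `σ`. -/

section Games

variable {C : Type u}

/-- `π` is a maximal play of the game with move relation `move`. -/
def IsPlay (move : C → C → Prop) (π : ℕ → Option C) : Prop :=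
  (∀ i c d, π i = some c → π (i + 1) = some d → move c d) ∧
  (∀ i c, π i = some c → π (i + 1) = none → ∀ d, ¬ move c d) ∧
  (∀ i, π i = none → π (i + 1) = none)

/-- The play `π` is consistent with strategy `σ` of the player owning the
configurations satisfying `owned`. -/
def ConsistentWith (owned : C → Prop) (σ : C → C) (π : ℕ → Option C) : Prop :=
  ∀ i c d, π i = some c → owned c → π (i + 1) = some d → d = σ c

/-- `σ` is a valid strategy for the player owning the configurations satisfying
`owned`: it picks a legal move wherever a move exists. -/
def ValidStrategy (owned : C → Prop) (move : C → C → Prop) (σ : C → C) : Prop :=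
  ∀ c, owned c → (∃ d, move c d) → move c (σ c)

/-- The play `π` is finite and ends in the configuration `c`. -/
def EndsAt (π : ℕ → Option C) (c : C) : Prop := ∃ i, π i = some c ∧ π (i + 1) = none

/-- The play `π` is infinite. -/
def InfinitePlay (π : ℕ → Option C) : Prop := ∀ i, π i ≠ none

/-- The Büchi winning condition on infinite plays: the play passes through
infinitely many configurations carrying a `✓` reward. -/
def BuchiWin (reward : C → Prop) (π : ℕ → Option C) : Prop :=
  ∀ n, ∃ i, n ≤ i ∧ ∃ c, π i = some c ∧ reward c

/-- Duplicator wins the play `π`: either the play is finite and Spoiler is stuck,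
or the play is infinite and satisfies the winning condition `infWin`. -/
def DupWinsPlay (dupOwned : C → Prop) (infWin : (ℕ → Option C) → Prop)
    (π : ℕ → Option C) : Prop :=
  (∃ c, EndsAt π c ∧ ¬ dupOwned c) ∨ (InfinitePlay π ∧ infWin π)

/-- Spoiler wins the play `π` (all plays not won by Duplicator). -/
def SpWinsPlay (dupOwned : C → Prop) (infWin : (ℕ → Option C) → Prop)
    (π : ℕ → Option C) : Prop :=
  (∃ c, EndsAt π c ∧ dupOwned c) ∨ (InfinitePlay π ∧ ¬ infWin π)

/-- Duplicator wins the configuration `c`: she has a strategy winning all plays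
starting in `c`. -/
def DupWins (dupOwned : C → Prop) (move : C → C → Prop)
    (infWin : (ℕ → Option C) → Prop) (c : C) : Prop :=
  ∃ σ : C → C, ValidStrategy dupOwned move σ ∧
    ∀ π, IsPlay move π → π 0 = some c → ConsistentWith dupOwned σ π →
      DupWinsPlay dupOwned infWin π

/-- Spoiler wins the configuration `c`: he has a strategy winning all plays
starting in `c`. -/
def SpWins (dupOwned : C → Prop) (move : C → C → Prop)
    (infWin : (ℕ → Option C) → Prop) (c : C) : Prop :=
  ∃ σ : C → C, ValidStrategy (fun d => ¬ dupOwned d) move σ ∧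
    ∀ π, IsPlay move π → π 0 = some c → ConsistentWith (fun d => ¬ dupOwned d) σ π →
      SpWinsPlay dupOwned infWin π

end Games

/-! ## The limited branching bisimulation (lbb) game -/

/-- Configurations of the lbb game: Spoiler-owned `⟨(s,t)⟩` and Duplicator-owned
`⟨(s,t),(a,s')⟩`. -/
inductive LConf (S : Type u) (A : Type v)
  | sp (p : S × S)
  | dup (p : S × S) (c : A × S)

/-- Ownership in the lbb game. -/
def LConf.dupOwned {S : Type u} {A : Type v} : LConf S A → Prop
  | .sp _ => False
  | .dup _ _ => True

/-- Moves of the lbb game. -/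
inductive LMove {S : Type u} {A : Type v} (L : LTS S A) : LConf S A → LConf S A → Prop
  | sp1 {s t a s'} (h : L.Trans s a s') :
      LMove L (LConf.sp (s, t)) (LConf.dup (s, t) (a, s'))
  | sp2 {s t a t'} (h : L.Trans t a t') :
      LMove L (LConf.sp (s, t)) (LConf.dup (t, s) (a, t'))
  | dup1 {u v u'} :
      LMove L (LConf.dup (u, v) (L.tau, u')) (LConf.sp (u', v))
  | dup2 {u v a u' v'} (h : L.Trans v a v') :
      LMove L (LConf.dup (u, v) (a, u')) (LConf.sp (u', v'))
  | dup3 {u v a u' v'} (h : L.TauStep v v') :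
      LMove L (LConf.dup (u, v) (a, u')) (LConf.sp (u, v'))

/-- `s ≡lb t`: Duplicator wins the lbb game from `⟨(s,t)⟩_S`; finite plays are won
by Duplicator iff Spoiler is stuck, and all infinite plays are won by Duplicator. -/
def LTS.lbbEquiv {S : Type u} {A : Type v} (L : LTS S A) (s t : S) : Prop :=
  DupWins LConf.dupOwned (LMove L) (fun _ => True) (LConf.sp (s, t))

/-! ## The branching bisimulation (bb) game -/

/-- Configurations of the bb game: `⟨(s,t),c,r⟩` owned by Spoiler or Duplicator,
with challenge `c ∈ (A × S) ∪ {†}` (where `none` is `†`) and reward `r`. -/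
inductive BConf (S : Type u) (A : Type v)
  | sp (p : S × S) (c : Option (A × S)) (r : Rw)
  | dup (p : S × S) (c : Option (A × S)) (r : Rw)

/-- Ownership in the bb game. -/
def BConf.dupOwned {S : Type u} {A : Type v} : BConf S A → Prop
  | .sp _ _ _ => False
  | .dup _ _ _ => True

/-- The configuration carries a `✓` reward. -/
def BConf.reward {S : Type u} {A : Type v} : BConf S A → Prop
  | .sp _ _ r => r = Rw.check
  | .dup _ _ r => r = Rw.check

/-- Moves of the bb game. -/
inductive BMove {S : Type u} {A : Type v} (L : LTS S A) : BConf S A → BConf S A → Prop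
  | sp1star {s t c r a s'} (h : L.Trans s a s') (hc : c = some (a, s') ∨ c = none) :
      BMove L (BConf.sp (s, t) c r) (BConf.dup (s, t) (some (a, s')) Rw.star)
  | sp1check {s t c r a s'} (h : L.Trans s a s')
      (hc : ¬(c = some (a, s') ∨ c = none)) :
      BMove L (BConf.sp (s, t) c r) (BConf.dup (s, t) (some (a, s')) Rw.check)
  | sp2 {s t c r a t'} (h : L.Trans t a t') :
      BMove L (BConf.sp (s, t) c r) (BConf.dup (t, s) (some (a, t')) Rw.check)
  | dup1 {u v u' r} :
      BMove L (BConf.dup (u, v) (some (L.tau, u')) r) (BConf.sp (u', v) none Rw.check)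
  | dup2 {u v a u' v' r} (h : L.Trans v a v') :
      BMove L (BConf.dup (u, v) (some (a, u')) r) (BConf.sp (u', v') none Rw.check)
  | dup3 {u v a u' v' r} (h : L.TauStep v v') :
      BMove L (BConf.dup (u, v) (some (a, u')) r)
        (BConf.sp (u, v') (some (a, u')) Rw.star)

/-- `s ≡b t`: Duplicator wins the bb game from `⟨(s,t),†,*⟩_S`, where infinite
plays are won by Duplicator iff they yield infinitely many `✓` rewards. -/
def LTS.bbEquiv {S : Type u} {A : Type v} (L : LTS S A) (s t : S) : Prop :=
  DupWins BConf.dupOwned (BMove L) (BuchiWin BConf.reward) (BConf.sp (s, t) none Rw.star)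

/-! ## The generic bisimulation (gb) game, and its explicit-divergence variant -/

/-- Configurations of the generic games: `⟨(s,t),c,m,r⟩` owned by Spoiler or
Duplicator, with challenge `c ∈ (A × S) ∪ {†}`, partial match
`m ∈ (S × {☹,☺}) ∪ {†}` and reward `r`. -/
inductive GConf (S : Type u) (A : Type v)
  | sp (p : S × S) (c : Option (A × S)) (m : Option (S × Face)) (r : Rw)
  | dup (p : S × S) (c : Option (A × S)) (m : Option (S × Face)) (r : Rw)

/-- Ownership in the generic games. -/
def GConf.dupOwned {S : Type u} {A : Type v} : GConf S A → Prop
  | .sp _ _ _ _ => False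
  | .dup _ _ _ _ => True

/-- The configuration carries a `✓` reward. -/
def GConf.reward {S : Type u} {A : Type v} : GConf S A → Prop
  | .sp _ _ _ r => r = Rw.check
  | .dup _ _ _ r => r = Rw.check

/-- Moves of the `E`-generic bisimulation game. The parameter `rw1` is the reward
handed out by Duplicator's rule (1): `✓` in the gb game, `*` in the gbed game. -/
inductive GMove {S : Type u} {A : Type v} (L : LTS S A) (E : Set Face) (rw1 : Rw) :
    GConf S A → GConf S A → Prop
  | sp1 {s t c m r} (hc : c ≠ none) :
      GMove L E rw1 (GConf.sp (s, t) c m r) (GConf.dup (s, t) c m Rw.star)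
  | sp2a {s t m r a s'} (h : L.Trans s a s') :
      GMove L E rw1 (GConf.sp (s, t) none m r)
        (GConf.dup (s, t) (some (a, s')) (some (t, Face.frown)) Rw.star)
  | sp2b {s t c m r a s'} (h : L.Trans s a s') (hc : c ≠ some (a, s')) :
      GMove L E rw1 (GConf.sp (s, t) c m r)
        (GConf.dup (s, t) (some (a, s')) (some (t, Face.frown)) Rw.check)
  | sp3 {s t c m r a t'} (h : L.Trans t a t') :
      GMove L E rw1 (GConf.sp (s, t) c m r)
        (GConf.dup (t, s) (some (a, t')) (some (s, Face.frown)) Rw.check)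
  | dup1 {u v u' vb f r} :
      GMove L E rw1 (GConf.dup (u, v) (some (L.tau, u')) (some (vb, f)) r)
        (GConf.sp (u', vb) none none rw1)
  | dup2a {u v a u' vb v' r} (h : L.Trans vb a v') :
      GMove L E rw1 (GConf.dup (u, v) (some (a, u')) (some (vb, Face.frown)) r)
        (GConf.sp (u', v') (some (a, u')) (some (v', Face.smile)) Rw.star)
  | dup2b {u v a u' vb v' r} (h : L.Trans vb a v') :
      GMove L E rw1 (GConf.dup (u, v) (some (a, u')) (some (vb, Face.frown)) r)
        (GConf.sp (u', v') none none Rw.check)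
  | dup2c {u v a u' vb v' r} (h : L.Trans vb a v') (hE : Face.smile ∈ E) :
      GMove L E rw1 (GConf.dup (u, v) (some (a, u')) (some (vb, Face.frown)) r)
        (GConf.sp (u, v) (some (a, u')) (some (v', Face.smile)) Rw.star)
  | dup3a {u v a u' vb f v' r} (h : L.TauStep vb v') :
      GMove L E rw1 (GConf.dup (u, v) (some (a, u')) (some (vb, f)) r)
        (GConf.sp (u, v') (some (a, u')) (some (v', f)) Rw.star)
  | dup3b {u v a u' vb v' r} (h : L.TauStep vb v') :
      GMove L E rw1 (GConf.dup (u, v) (some (a, u')) (some (vb, Face.smile)) r)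
        (GConf.sp (u', v') none none Rw.check)
  | dup3c {u v a u' vb f v' r} (h : L.TauStep vb v') (hE : f ∈ E) :
      GMove L E rw1 (GConf.dup (u, v) (some (a, u')) (some (vb, f)) r)
        (GConf.sp (u, v) (some (a, u')) (some (v', f)) Rw.star)

/-- `E(x,y) ⊆ {☹,☺}`: the smallest set containing `☹` when `x = o` and `☺` when
`y = o`. -/
def Exy (x y : XY) : Set Face :=
  {f | (f = Face.frown ∧ x = XY.o) ∨ (f = Face.smile ∧ y = XY.o)}

/-- `s ≡_E t`: Duplicator wins the `E`-generic bisimulation game from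
`⟨(s,t),†,†,*⟩_S`; infinite plays are won by Duplicator iff they yield infinitely
many `✓` rewards. -/
def LTS.gbEquiv {S : Type u} {A : Type v} (L : LTS S A) (E : Set Face) (s t : S) : Prop :=
  DupWins GConf.dupOwned (GMove L E Rw.check) (BuchiWin GConf.reward)
    (GConf.sp (s, t) none none Rw.star)

/-- `s ≡ed_E t`: Duplicator wins the `E`-generic bisimulation with explicit
divergence game from `⟨(s,t),†,†,*⟩_S`. -/
def LTS.gbedEquiv {S : Type u} {A : Type v} (L : LTS S A) (E : Set Face) (s t : S) : Prop :=
  DupWins GConf.dupOwned (GMove L E Rw.star) (BuchiWin GConf.reward)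
    (GConf.sp (s, t) none none Rw.star)

/-- The abstraction function `f(⟨(s,t),c,m,r⟩) = ⟨(s,t),c,r⟩` from configurations
of the generic game to configurations of the bb game, preserving ownership. -/
def fabs {S : Type u} {A : Type v} : GConf S A → BConf S A
  | .sp p c _ r => .sp p c r
  | .dup p c _ r => .dup p c r



variable {S : Type u} {A : Type v}

/-- Semi-generic bisimulation (à la semi-branching bisimulations). -/
def IsSemiGenBisim (L : LTS S A) (x y : XY) (R : S → S → Prop) : Prop :=
  (∀ s t, R s t → R t s) ∧
  ∀ s t a s', R s t → L.Trans s a s' →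
    (a = L.tau ∧ ∃ w w', L.TauStar t w ∧ L.TauStar w w' ∧
        (x = XY.b → R s w) ∧ (y = XY.b → R s' w) ∧ R s' w') ∨
    (∃ t1 t2 t', L.TauStar t t1 ∧ (x = XY.b → R s t1) ∧ L.Trans t1 a t2 ∧
        L.TauStar t2 t' ∧ (y = XY.b → R s' t2) ∧ R s' t')

/-- Semi-generic bisimilarity. -/
def SB (L : LTS S A) (x y : XY) (s t : S) : Prop :=
  ∃ R, IsSemiGenBisim L x y R ∧ R s t

variable {L : LTS S A} {x y : XY}

theorem SB.symm {s t : S} (h : SB L x y s t) : SB L x y t s := by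
  obtain ⟨R, hR, hst⟩ := h
  exact ⟨R, hR, hR.1 _ _ hst⟩

theorem isSemiGenBisim_SB : IsSemiGenBisim L x y (SB L x y) := by
  constructor
  · exact fun s t h => h.symm
  · rintro s t a s' ⟨R, hR, hst⟩ htr
    rcases hR.2 s t a s' hst htr with ⟨ha, w, w', h1, h2, h3, h4, h5⟩ |
      ⟨t1, t2, t', h1, h2, h3, h4, h5, h6⟩
    · exact Or.inl ⟨ha, w, w', h1, h2, fun hx => ⟨R, hR, h3 hx⟩,
        fun hy => ⟨R, hR, h4 hy⟩, ⟨R, hR, h5⟩⟩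
    · exact Or.inr ⟨t1, t2, t', h1, fun hx => ⟨R, hR, h2 hx⟩, h3, h4,
        fun hy => ⟨R, hR, h5 hy⟩, ⟨R, hR, h6⟩⟩

theorem LTS.IsGenBisim.isSemiGenBisim {R : S → S → Prop} (h : L.IsGenBisim x y R) :
    IsSemiGenBisim L x y R := by
  refine ⟨h.1, fun s t a s' hst htr => ?_⟩
  rcases h.2 s t a s' hst htr with ⟨ha, hs't⟩ | ⟨t1, t2, t', h1, h2, h3, h4⟩
  · exact Or.inl ⟨ha, t, t, .refl, .refl, fun _ => hst, fun _ => hs't, hs't⟩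
  · exact Or.inr ⟨t1, t2, t', h1.1, fun hx => (h1.2 hx).2, h2, h3.1,
      fun hy => (h3.2 hy).1, h4⟩

theorem genBisimilar_sb {s t : S} (h : L.GenBisimilar x y s t) : SB L x y s t := by
  obtain ⟨R, hR, hst⟩ := h
  exact ⟨R, hR.isSemiGenBisim, hst⟩

/-- Lifting a τ-path along semi-generic bisimilarity. -/
theorem SB.pathLift {t u t'' : S} (hrel : SB L x y t u) (hp : L.TauStar t t'') :
    ∃ u', L.TauStar u u' ∧ SB L x y t'' u' := by
  induction hp using Relation.ReflTransGen.head_induction_on generalizing u with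
  | refl => exact ⟨u, .refl, hrel⟩
  | head hstep _ ih =>
    rcases isSemiGenBisim_SB.2 _ u L.tau _ hrel hstep with
      ⟨_, w, w', h1, h2, _, _, h5⟩ | ⟨t1, t2, t', h1, _, h3, h4, _, h6⟩
    · obtain ⟨u', hu1, hu2⟩ := ih h5
      exact ⟨u', (h1.trans h2).trans hu1, hu2⟩
    · obtain ⟨u', hu1, hu2⟩ := ih h6
      exact ⟨u', ((h1.tail h3).trans h4).trans hu1, hu2⟩

/-- The stuttering property for semi-generic bisimilarity. -/
theorem SB.stut {p e1 e2 v : S} (h1 : SB L x y p e1) (h2 : SB L x y p e2)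
    (hp1 : L.TauStar e1 v) (hp2 : L.TauStar v e2) : SB L x y p v := by
  classical
  set M : S → S → Prop := fun c d =>
    (∃ t t1, SB L x y c t ∧ SB L x y c t1 ∧ L.TauStar t d ∧ L.TauStar d t1) ∨
    (∃ t t1, SB L x y d t ∧ SB L x y d t1 ∧ L.TauStar t c ∧ L.TauStar c t1) with hM
  have hsub : ∀ c d, SB L x y c d → M c d := fun c d h =>
    Or.inl ⟨d, d, h, h, .refl, .refl⟩
  have hMsemi : IsSemiGenBisim L x y M := by
    constructor
    · rintro c d (h | h)
      · exact Or.inr h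
      · exact Or.inl h
    · rintro c d a c' hcd htr
      rcases hcd with ⟨t, t1, hct, hct1, htd, hdt1⟩ | ⟨t, t1, hdt, hdt1, htc, hct1⟩
      · -- c is the "outer" state, d sits on a path between t and t1
        rcases isSemiGenBisim_SB.2 _ _ a _ hct1 htr with
          ⟨ha, w, w', k1, k2, k3, k4, k5⟩ | ⟨p1, p2, p', k1, k2, k3, k4, k5, k6⟩
        · exact Or.inl ⟨ha, w, w', hdt1.trans k1, k2,
            fun hx => hsub _ _ (k3 hx), fun hy => hsub _ _ (k4 hy), hsub _ _ k5⟩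
        · exact Or.inr ⟨p1, p2, p', hdt1.trans k1, fun hx => hsub _ _ (k2 hx), k3, k4,
            fun hy => hsub _ _ (k5 hy), hsub _ _ k6⟩
      · -- c sits on a path from t towards t1, and d is the outer state
        obtain ⟨s1, hds1, hcs1⟩ := SB.pathLift (SB.symm hdt) htc
        rcases isSemiGenBisim_SB.2 _ _ a _ hcs1 htr with
          ⟨ha, w, w', k1, k2, k3, k4, k5⟩ | ⟨p1, p2, p', k1, k2, k3, k4, k5, k6⟩
        · exact Or.inl ⟨ha, w, w', hds1.trans k1, k2,
            fun hx => hsub _ _ (k3 hx), fun hy => hsub _ _ (k4 hy), hsub _ _ k5⟩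
        · exact Or.inr ⟨p1, p2, p', hds1.trans k1, fun hx => hsub _ _ (k2 hx), k3, k4,
            fun hy => hsub _ _ (k5 hy), hsub _ _ k6⟩
  exact ⟨M, hMsemi, Or.inl ⟨e1, e2, h1, h2, hp1, hp2⟩⟩



variable {S : Type u} {A : Type v}

/-- A strong τ-step relative to an outer state `p`: in case `z = b` the target must
be semi-generic-bisimilar to `p`. -/
def SStep (L : LTS S A) (x y : XY) (z : XY) (p : S) : S → S → Prop :=
  fun c d => L.TauStep c d ∧ (z = XY.b → SB L x y p d)

variable {L : LTS S A} {x y : XY}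

theorem strong_upgrade {z : XY} {p u u'' : S} (hp : L.TauStar u u'') :
    (z = XY.b → SB L x y p u ∧ SB L x y p u'') →
    Relation.ReflTransGen (SStep L x y z p) u u'' := by
  induction hp using Relation.ReflTransGen.head_induction_on with
  | refl => exact fun _ => .refl
  | @head a c hstep hpath ih =>
    intro h
    have hc : z = XY.b → SB L x y p c :=
      fun hz => SB.stut (h hz).1 (h hz).2 (Relation.ReflTransGen.single hstep) hpath
    exact Relation.ReflTransGen.head ⟨hstep, hc⟩ (ih fun hz => ⟨hc hz, (h hz).2⟩)

theorem sstep_tauStar {z : XY} {p u u'' : S}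
    (h : Relation.ReflTransGen (SStep L x y z p) u u'') : L.TauStar u u'' := by
  induction h with
  | refl => exact .refl
  | tail _ hstep ih => exact ih.tail hstep.1

/-- Strong transfer property of semi-generic bisimilarity. -/
theorem SB.strongTransfer {s t : S} {a : A} {s' : S}
    (hst : SB L x y s t) (htr : L.Trans s a s') :
    (a = L.tau ∧ SB L x y s' t) ∨
    ∃ t1 t2 t', Relation.ReflTransGen (SStep L x y x s) t t1 ∧
      (x = XY.b → SB L x y s t1) ∧ L.Trans t1 a t2 ∧
      Relation.ReflTransGen (SStep L x y y s') t2 t' ∧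
      (y = XY.b → SB L x y s' t2) ∧ SB L x y s' t' := by
  rcases isSemiGenBisim_SB.2 _ _ a _ hst htr with
    ⟨ha, w, w', k1, k2, k3, k4, k5⟩ | ⟨t1, t2, t', k1, k2, k3, k4, k5, k6⟩
  · rcases Relation.ReflTransGen.cases_head k2 with heq | ⟨d, hstep, hdw'⟩
    · subst heq
      rcases Relation.ReflTransGen.cases_tail k1 with heq2 | ⟨c, htc, hcw⟩
      · subst heq2; exact Or.inl ⟨ha, k5⟩
      · refine Or.inr ⟨c, w, w, ?_, ?_, ha ▸ hcw, .refl, fun _ => k5, k5⟩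
        · exact strong_upgrade htc
            (fun hx => ⟨hst, SB.stut hst (k3 hx) htc (.single hcw)⟩)
        · exact fun hx => SB.stut hst (k3 hx) htc (.single hcw)
    · have hd : y = XY.b → SB L x y s' d :=
        fun hy => SB.stut (k4 hy) k5 (.single hstep) hdw'
      refine Or.inr ⟨w, d, w', strong_upgrade k1 (fun hx => ⟨hst, k3 hx⟩), k3,
        ha ▸ hstep, strong_upgrade hdw' (fun hy => ⟨hd hy, k5⟩), hd, k5⟩
  · exact Or.inr ⟨t1, t2, t', strong_upgrade k1 (fun hx => ⟨hst, k2 hx⟩), k2, k3,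
      strong_upgrade k4 (fun hy => ⟨k5 hy, k6⟩), k5, k6⟩

section GameLemmas

variable {C : Type w} {dupOwned : C → Prop} {move : C → C → Prop}
  {reward : C → Prop}

/-- `σ` wins every consistent play from `c`. -/
def WinsFrom (dupOwned : C → Prop) (move : C → C → Prop)
    (reward : C → Prop) (σ : C → C) (c : C) : Prop :=
  ∀ π, IsPlay move π → π 0 = some c → ConsistentWith dupOwned σ π →
    DupWinsPlay dupOwned (BuchiWin reward) π

theorem WinsFrom.of_move {σ : C → C} {c d : C}
    (h : WinsFrom dupOwned move reward σ c) (hmv : move c d)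
    (hσ : dupOwned c → d = σ c) : WinsFrom dupOwned move reward σ d := by
  intro π hplay h0 hcons
  set π' : ℕ → Option C := fun n => match n with
    | 0 => some c
    | n + 1 => π n with hπ'
  have hplay' : IsPlay move π' := by
    refine ⟨?_, ?_, ?_⟩
    · rintro (_ | i) c' d' h1 h2
      · simp only [hπ'] at h1 h2
        cases h1; rw [h0] at h2; cases h2; exact hmv
      · exact hplay.1 i c' d' h1 h2
    · rintro (_ | i) c' h1 h2
      · simp only [hπ'] at h1 h2; rw [h0] at h2; cases h2
      · exact hplay.2.1 i c' h1 h2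
    · rintro (_ | i) h1
      · exact absurd h1 (by simp [hπ'])
      · exact hplay.2.2 i h1
  have hcons' : ConsistentWith dupOwned σ π' := by
    rintro (_ | i) c' d' h1 hd h2
    · simp only [hπ'] at h1 h2
      cases h1; rw [h0] at h2; cases h2; exact hσ hd
    · exact hcons i c' d' h1 hd h2
  rcases h π' hplay' rfl hcons' with ⟨e, ⟨i, h1, h2⟩, h3⟩ | ⟨hinf, hwin⟩
  · rcases i with _ | i
    · simp only [hπ'] at h1 h2; rw [h0] at h2; cases h2
    · exact Or.inl ⟨e, ⟨i, h1, h2⟩, h3⟩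
  · refine Or.inr ⟨fun i => hinf (i + 1), fun n => ?_⟩
    obtain ⟨i, hi, e, he, hre⟩ := hwin (n + 1)
    rcases i with _ | i
    · omega
    · exact ⟨i, by omega, e, he, hre⟩

theorem WinsFrom.not_stuck {σ : C → C} {c : C}
    (h : WinsFrom dupOwned move reward σ c) (hd : dupOwned c)
    (hst : ∀ d, ¬ move c d) : False := by
  set π : ℕ → Option C := fun n => if n = 0 then some c else none with hπ
  have hplay : IsPlay move π := by
    refine ⟨?_, ?_, ?_⟩
    · rintro i c' d' h1 h2
      rcases Nat.eq_zero_or_pos i with rfl | hi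
      · exact absurd h2 (by simp [hπ])
      · exact absurd h1 (by simp [hπ, Nat.pos_iff_ne_zero.mp hi])
    · rintro i c' h1 h2
      rcases Nat.eq_zero_or_pos i with rfl | hi
      · simp only [hπ, if_pos rfl] at h1; cases h1; exact hst
      · exact absurd h1 (by simp [hπ, Nat.pos_iff_ne_zero.mp hi])
    · intro i _; simp [hπ]
  have hcons : ConsistentWith dupOwned σ π := by
    rintro i c' d' h1 _ h2
    rcases Nat.eq_zero_or_pos i with rfl | hi
    · exact absurd h2 (by simp [hπ])
    · exact absurd h1 (by simp [hπ, Nat.pos_iff_ne_zero.mp hi])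
  rcases h π hplay (by simp [hπ]) hcons with ⟨e, ⟨i, h1, h2⟩, h3⟩ | ⟨hinf, _⟩
  · rcases Nat.eq_zero_or_pos i with rfl | hi
    · simp only [hπ, if_pos rfl] at h1; cases h1; exact h3 hd
    · exact absurd h1 (by simp [hπ, Nat.pos_iff_ne_zero.mp hi])
  · exact hinf 1 (by simp [hπ])

end GameLemmas

variable {S : Type u} {A : Type v}

/-- Duplicator's plan in the smile phase. -/
inductive SPl (L : LTS S A) (x y : XY) (a : A) (u' : S) : S → ℕ → Prop
  | fin {w} : a = L.tau → SB L x y u' w → SPl L x y a u' w 0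
  | close {w w'} : L.TauStep w w' → SB L x y u' w' → SPl L x y a u' w 1
  | step {w w' n} : L.TauStep w w' → (y = XY.b → SB L x y u' w') →
      SPl L x y a u' w' n → SPl L x y a u' w (n + 1)

/-- Duplicator's plan in the frown phase. -/
inductive FPl (L : LTS S A) (x y : XY) (u : S) (a : A) (u' : S) : S → ℕ → Prop
  | fin {w} : a = L.tau → SB L x y u' w → FPl L x y u a u' w 0
  | closeB {w t2} : L.Trans w a t2 → SB L x y u' t2 → FPl L x y u a u' w 1
  | toSmile {w t2 n} : L.Trans w a t2 → (y = XY.b → SB L x y u' t2) →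
      SPl L x y a u' t2 n → FPl L x y u a u' w (n + 2)
  | step {w w' n} : L.TauStep w w' → (x = XY.b → SB L x y u w') →
      FPl L x y u a u' w' n → FPl L x y u a u' w (n + 1)

variable {L : LTS S A} {x y : XY}

theorem mkSPl {a : A} {u' z t' : S}
    (hp : Relation.ReflTransGen (SStep L x y y u') z t') (hfin : SB L x y u' t') :
    z = t' ∨ ∃ n, SPl L x y a u' z n := by
  induction hp using Relation.ReflTransGen.head_induction_on with
  | refl => exact Or.inl rfl
  | @head b c hstep _ ih =>
    rcases ih with rfl | ⟨n, pl⟩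
    · exact Or.inr ⟨1, .close hstep.1 hfin⟩
    · exact Or.inr ⟨n + 1, .step hstep.1 hstep.2 pl⟩

theorem mkFPl {s t : S} {a : A} {s' : S} (hst : SB L x y s t) (htr : L.Trans s a s') :
    ∃ n, FPl L x y s a s' t n := by
  rcases SB.strongTransfer hst htr with ⟨ha, hN⟩ |
    ⟨t1, t2, t', p1, hx1, htr2, p2, hy2, hfin⟩
  · exact ⟨0, .fin ha hN⟩
  · have base : ∃ n, FPl L x y s a s' t1 n := by
      rcases mkSPl (a := a) p2 hfin with rfl | ⟨n, pl⟩
      · exact ⟨1, .closeB htr2 hfin⟩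
      · exact ⟨n + 2, .toSmile htr2 hy2 pl⟩
    clear hx1 hst
    induction p1 using Relation.ReflTransGen.head_induction_on with
    | refl => exact base
    | @head b c hstep _ ih =>
      obtain ⟨n, pl⟩ := ih
      exact ⟨n + 1, .step hstep.1 hstep.2 pl⟩

variable {S : Type u} {A : Type v}

/-- The data of a configuration: pair, challenge, match (discarding owner/reward). -/
def GConf.pcm : GConf S A → (S × S) × Option (A × S) × Option (S × Face)
  | .sp p c m _ => (p, c, m)
  | .dup p c m _ => (p, c, m)

/-- Duplicator's invariant (on configuration data) for the forward direction. -/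
inductive Inv (L : LTS S A) (x y : XY) :
    (S × S) × Option (A × S) × Option (S × Face) → Prop
  | dag {u v} : SB L x y u v → Inv L x y ((u, v), none, none)
  | frown {u v a u' w} : SB L x y u v → L.Trans u a u' → (x = XY.b → v = w) →
      (∃ n, FPl L x y u a u' w n) → Inv L x y ((u, v), some (a, u'), some (w, .frown))
  | smile {u v a u' w} : SB L x y u v → (y = XY.b → u = u' ∧ v = w) →
      (∃ n, SPl L x y a u' w n) → Inv L x y ((u, v), some (a, u'), some (w, .smile))

/-- The invariant on configurations. -/
def InvC (L : LTS S A) (x y : XY) (c : GConf S A) : Prop :=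
  Inv L x y c.pcm ∧ (GConf.dupOwned c → c.pcm.2.1 ≠ none)

theorem Inv.sb {L : LTS S A} {x y : XY} {u v : S} {cc mm}
    (h : Inv L x y ((u, v), cc, mm)) : SB L x y u v := by
  cases h with
  | dag h => exact h
  | frown h _ _ _ => exact h
  | smile h _ _ => exact h

open Classical in
noncomputable def muF (L : LTS S A) (x y : XY) (u : S) (a : A) (u' w : S) : ℕ :=
  if h : ∃ n, FPl L x y u a u' w n then Nat.find h else 0

open Classical in
noncomputable def muS (L : LTS S A) (x y : XY) (a : A) (u' w : S) : ℕ :=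
  if h : ∃ n, SPl L x y a u' w n then Nat.find h else 0

open Classical in
theorem muF_spec {L : LTS S A} {x y : XY} {u : S} {a : A} {u' w : S}
    (h : ∃ n, FPl L x y u a u' w n) : FPl L x y u a u' w (muF L x y u a u' w) := by
  rw [muF, dif_pos h]; exact Nat.find_spec h

open Classical in
theorem muF_le {L : LTS S A} {x y : XY} {u : S} {a : A} {u' w : S} {n : ℕ}
    (h : FPl L x y u a u' w n) : muF L x y u a u' w ≤ n := by
  rw [muF, dif_pos ⟨n, h⟩]; exact Nat.find_le h

open Classical in
theorem muS_spec {L : LTS S A} {x y : XY} {a : A} {u' w : S}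
    (h : ∃ n, SPl L x y a u' w n) : SPl L x y a u' w (muS L x y a u' w) := by
  rw [muS, dif_pos h]; exact Nat.find_spec h

open Classical in
theorem muS_le {L : LTS S A} {x y : XY} {a : A} {u' w : S} {n : ℕ}
    (h : SPl L x y a u' w n) : muS L x y a u' w ≤ n := by
  rw [muS, dif_pos ⟨n, h⟩]; exact Nat.find_le h

/-- The measure on configuration data. -/
noncomputable def mu (L : LTS S A) (x y : XY) :
    (S × S) × Option (A × S) × Option (S × Face) → ℕ
  | ((u, _), some (a, u'), some (w, Face.frown)) => muF L x y u a u' w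
  | (_, some (a, u'), some (w, Face.smile)) => muS L x y a u' w
  | _ => 0

theorem xy_cases (z : XY) : z = XY.o ∨ z = XY.b := by cases z <;> simp

theorem frown_mem_Exy {x y : XY} (h : x = XY.o) : Face.frown ∈ Exy x y :=
  Or.inl ⟨rfl, h⟩

theorem smile_mem_Exy {x y : XY} (h : y = XY.o) : Face.smile ∈ Exy x y :=
  Or.inr ⟨rfl, h⟩

variable {L : LTS S A} {x y : XY}

/-- Ownership alternation. -/
theorem GMove.flip {E : Set Face} {rw1 : Rw} {c d : GConf S A}
    (h : GMove L E rw1 c d) : (GConf.dupOwned d ↔ ¬ GConf.dupOwned c) := by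
  cases h <;> simp [GConf.dupOwned]

/-- A non-rewarded move from a Duplicator configuration carries a challenge. -/
theorem GMove.dup_no_reward {E : Set Face} {c d : GConf S A}
    (h : GMove L E Rw.check c d) (hc : GConf.dupOwned c) (hr : ¬ GConf.reward d) :
    d.pcm.2.1 ≠ none := by
  cases h with
  | sp1 hc' => exact absurd hc (by simp [GConf.dupOwned])
  | sp2a h => exact absurd hc (by simp [GConf.dupOwned])
  | sp2b h hc' => exact absurd hc (by simp [GConf.dupOwned])
  | sp3 h => exact absurd hc (by simp [GConf.dupOwned])
  | dup1 => exact absurd rfl hr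
  | dup2a h => simp [GConf.pcm]
  | dup2b h => exact absurd rfl hr
  | dup2c h hE => simp [GConf.pcm]
  | dup3a h => simp [GConf.pcm]
  | dup3b h => exact absurd rfl hr
  | dup3c h hE => simp [GConf.pcm]

/-- A non-rewarded move from a Spoiler configuration either originates in a
configuration without challenge or preserves the configuration data. -/
theorem GMove.sp_no_reward {E : Set Face} {rw1 : Rw} {c d : GConf S A}
    (h : GMove L E rw1 c d) (hc : ¬ GConf.dupOwned c) (hr : ¬ GConf.reward d) :
    c.pcm.2.1 = none ∨ d.pcm = c.pcm := by
  cases h with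
  | sp1 hc' => exact Or.inr rfl
  | sp2a h => exact Or.inl rfl
  | sp2b h hc' => exact absurd rfl hr
  | sp3 h => exact absurd rfl hr
  | dup1 => exact absurd trivial hc
  | dup2a h => exact absurd trivial hc
  | dup2b h => exact absurd trivial hc
  | dup2c h hE => exact absurd trivial hc
  | dup3a h => exact absurd trivial hc
  | dup3b h => exact absurd trivial hc
  | dup3c h hE => exact absurd trivial hc

variable {S : Type u} {A : Type v} {L : LTS S A} {x y : XY}

/-- Duplicator has a good move from every invariant configuration she owns. -/
theorem dup_progress {c : GConf S A} (hc : InvC L x y c) (hd : GConf.dupOwned c) :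
    ∃ d, GMove L (Exy x y) Rw.check c d ∧ InvC L x y d ∧
      (GConf.reward d ∨ mu L x y d.pcm < mu L x y c.pcm) := by
  obtain ⟨hinv, hch⟩ := hc
  cases c with
  | sp p cc mm r => exact absurd hd (by simp [GConf.dupOwned])
  | dup p cc mm r =>
    obtain ⟨u, v⟩ := p
    cases hinv with
    | dag hsb => exact absurd rfl (hch hd)
    | @frown u v a u' w hsb htr hxw hpl =>
      have hmin := muF_spec hpl
      have hmu : mu L x y (GConf.dup (u, v) (some (a, u')) (some (w, Face.frown)) r).pcm
          = muF L x y u a u' w := rfl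
      generalize hn : muF L x y u a u' w = n₀ at hmin hmu
      cases hmin with
      | fin ha hN =>
        subst ha
        exact ⟨.sp (u', w) none none Rw.check, .dup1, ⟨.dag hN, by simp [GConf.dupOwned]⟩,
          Or.inl rfl⟩
      | closeB htr2 hN =>
        exact ⟨.sp (u', _) none none Rw.check, .dup2b htr2,
          ⟨.dag hN, by simp [GConf.dupOwned]⟩, Or.inl rfl⟩
      | @toSmile _ t2 m htr2 hy2 spl =>
        rcases xy_cases y with hy | hy
        · refine ⟨.sp (u, v) (some (a, u')) (some (t2, .smile)) Rw.star,
            .dup2c htr2 (smile_mem_Exy hy), ⟨.smile hsb (fun h => absurd h (by simp [hy])) ⟨m, spl⟩,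
              by simp [GConf.dupOwned, GConf.pcm]⟩, Or.inr ?_⟩
          exact lt_of_le_of_lt (muS_le spl) (by omega)
        · refine ⟨.sp (u', t2) (some (a, u')) (some (t2, .smile)) Rw.star,
            .dup2a htr2, ⟨.smile (hy2 hy) (fun _ => ⟨rfl, rfl⟩) ⟨m, spl⟩,
              by simp [GConf.dupOwned, GConf.pcm]⟩, Or.inr ?_⟩
          exact lt_of_le_of_lt (muS_le spl) (by omega)
      | @step _ w' m hstep hx2 fpl =>
        rcases xy_cases x with hx | hx
        · refine ⟨.sp (u, v) (some (a, u')) (some (w', .frown)) Rw.star,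
            .dup3c hstep (frown_mem_Exy hx),
            ⟨.frown hsb htr (fun h => absurd h (by simp [hx])) ⟨m, fpl⟩,
              by simp [GConf.dupOwned, GConf.pcm]⟩, Or.inr ?_⟩
          exact lt_of_le_of_lt (muF_le fpl) (by omega)
        · refine ⟨.sp (u, w') (some (a, u')) (some (w', .frown)) Rw.star,
            .dup3a hstep, ⟨.frown (hx2 hx) htr (fun _ => rfl) ⟨m, fpl⟩,
              by simp [GConf.dupOwned, GConf.pcm]⟩, Or.inr ?_⟩
          exact lt_of_le_of_lt (muF_le fpl) (by omega)
    | @smile u v a u' w hsb hyuv hpl =>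
      have hmin := muS_spec hpl
      have hmu : mu L x y (GConf.dup (u, v) (some (a, u')) (some (w, Face.smile)) r).pcm
          = muS L x y a u' w := rfl
      generalize hn : muS L x y a u' w = n₀ at hmin hmu
      cases hmin with
      | fin ha hN =>
        subst ha
        exact ⟨.sp (u', w) none none Rw.check, .dup1, ⟨.dag hN, by simp [GConf.dupOwned]⟩,
          Or.inl rfl⟩
      | close hstep hN =>
        exact ⟨.sp (u', _) none none Rw.check, .dup3b hstep,
          ⟨.dag hN, by simp [GConf.dupOwned]⟩, Or.inl rfl⟩
      | @step _ w' m hstep hy2 spl =>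
        rcases xy_cases y with hy | hy
        · refine ⟨.sp (u, v) (some (a, u')) (some (w', .smile)) Rw.star,
            .dup3c hstep (smile_mem_Exy hy),
            ⟨.smile hsb (fun h => absurd h (by simp [hy])) ⟨m, spl⟩,
              by simp [GConf.dupOwned, GConf.pcm]⟩, Or.inr ?_⟩
          exact lt_of_le_of_lt (muS_le spl) (by omega)
        · refine ⟨.sp (u, w') (some (a, u')) (some (w', .smile)) Rw.star,
            .dup3a hstep, ⟨.smile (by rw [(hyuv hy).1] at hsb ⊢; exact (hy2 hy))
              (fun _ => ⟨(hyuv hy).1, rfl⟩) ⟨m, spl⟩,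
              by simp [GConf.dupOwned, GConf.pcm]⟩, Or.inr ?_⟩
          exact lt_of_le_of_lt (muS_le spl) (by omega)

/-- The invariant is preserved by Spoiler's moves. -/
theorem sp_preserve {c d : GConf S A} (hc : InvC L x y c) (hsp : ¬ GConf.dupOwned c)
    (hmv : GMove L (Exy x y) Rw.check c d) : InvC L x y d := by
  obtain ⟨hinv, -⟩ := hc
  cases hmv with
  | @sp1 s t cc mm r hc' =>
    exact ⟨hinv, fun _ => hc'⟩
  | @sp2a s t mm r a s' h =>
    have hsb : SB L x y s t := by
      cases hinv with
      | dag h => exact h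
    exact ⟨.frown hsb h (fun _ => rfl) (mkFPl hsb h), by simp [GConf.dupOwned, GConf.pcm]⟩
  | @sp2b s t cc mm r a s' h hc' =>
    have hsb : SB L x y s t := by
      cases hinv with
      | dag h => exact h
      | frown h _ _ _ => exact h
      | smile h _ _ => exact h
    exact ⟨.frown hsb h (fun _ => rfl) (mkFPl hsb h), by simp [GConf.dupOwned, GConf.pcm]⟩
  | @sp3 s t cc mm r a t' h =>
    have hsb : SB L x y s t := by
      cases hinv with
      | dag h => exact h
      | frown h _ _ _ => exact h
      | smile h _ _ => exact h
    exact ⟨.frown hsb.symm h (fun _ => rfl) (mkFPl hsb.symm h),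
      by simp [GConf.dupOwned, GConf.pcm]⟩
  | dup1 => exact absurd trivial hsp
  | dup2a h => exact absurd trivial hsp
  | dup2b h => exact absurd trivial hsp
  | dup2c h hE => exact absurd trivial hsp
  | dup3a h => exact absurd trivial hsp
  | dup3b h => exact absurd trivial hsp
  | dup3c h hE => exact absurd trivial hsp

variable {S : Type u} {A : Type v} {L : LTS S A} {x y : XY}

/-- Forward direction: semi-generic bisimilarity implies that Duplicator wins. -/
theorem sb_gbEquiv {s t : S} (h : SB L x y s t) : L.gbEquiv (Exy x y) s t := by
  classical
  set E := Exy x y with hE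
  set Good : GConf S A → GConf S A → Prop := fun c d =>
    GMove L E Rw.check c d ∧ (GConf.dupOwned c → InvC L x y c →
      InvC L x y d ∧ (GConf.reward d ∨ mu L x y d.pcm < mu L x y c.pcm)) with hGood
  set σ : GConf S A → GConf S A := fun c => @Classical.epsilon _ ⟨c⟩ (Good c) with hσ
  have hGoodEx : ∀ c : GConf S A, (∃ d, GMove L E Rw.check c d) → ∃ d, Good c d := by
    rintro c ⟨d, hd⟩
    by_cases hdup : GConf.dupOwned c
    · by_cases hinv : InvC L x y c
      · obtain ⟨d', h1, h2, h3⟩ := dup_progress hinv hdup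
        exact ⟨d', h1, fun _ _ => ⟨h2, h3⟩⟩
      · exact ⟨d, hd, fun _ hi => absurd hi hinv⟩
    · exact ⟨d, hd, fun hdu => absurd hdu hdup⟩
  have hσspec : ∀ c : GConf S A, (∃ d, GMove L E Rw.check c d) → Good c (σ c) :=
    fun c hex => Classical.epsilon_spec (hGoodEx c hex)
  have hvalid : ValidStrategy GConf.dupOwned (GMove L E Rw.check) σ :=
    fun c _ hex => (hσspec c hex).1
  refine ⟨σ, hvalid, ?_⟩
  intro π hplay h0 hcons
  have hInv : ∀ i c, π i = some c → InvC L x y c := by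
    intro i
    induction i with
    | zero =>
      intro c hc
      rw [h0] at hc
      cases hc
      exact ⟨Inv.dag h, fun hd => absurd hd (by simp [GConf.dupOwned])⟩
    | succ i ih =>
      intro d hd
      cases hci : π i with
      | none => exact absurd hd (by rw [hplay.2.2 i hci]; simp)
      | some c =>
        have hmv := hplay.1 i c d hci hd
        have hic := ih c hci
        by_cases hdup : GConf.dupOwned c
        · have hde : d = σ c := hcons i c d hci hdup hd
          rw [hde]
          exact ((hσspec c ⟨d, hmv⟩).2 hdup hic).1
        · exact sp_preserve hic hdup hmv
  by_cases hfin : ∃ i, π i = none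
  · left
    have hne : Nat.find hfin ≠ 0 := by
      intro h'
      have := Nat.find_spec hfin
      rw [h'] at this
      rw [h0] at this
      cases this
    obtain ⟨j, hj⟩ : ∃ j, Nat.find hfin = j + 1 := ⟨Nat.find hfin - 1, by omega⟩
    have hjlt : j < Nat.find hfin := by omega
    have hjne := Nat.find_min hfin hjlt
    cases hcj : π j with
    | none => exact absurd hcj hjne
    | some c =>
      have hnone : π (j + 1) = none := by rw [← hj]; exact Nat.find_spec hfin
      have hstuck := hplay.2.1 j c hcj hnone
      have hinvc := hInv j c hcj
      refine ⟨c, ⟨j, hcj, hnone⟩, fun hdup => ?_⟩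
      obtain ⟨d', h1, -, -⟩ := dup_progress hinvc hdup
      exact hstuck d' h1
  · push_neg at hfin
    refine Or.inr ⟨hfin, ?_⟩
    by_contra hbuchi
    unfold BuchiWin at hbuchi
    push_neg at hbuchi
    obtain ⟨K, hK⟩ := hbuchi
    choose cfg hcfg using fun i => Option.ne_none_iff_exists'.mp (hfin i)
    have hmv : ∀ i, GMove L E Rw.check (cfg i) (cfg (i + 1)) :=
      fun i => hplay.1 i _ _ (hcfg i) (hcfg (i + 1))
    have hrew : ∀ i, K ≤ i → ¬ GConf.reward (cfg i) := by
      intro i hKi hr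
      exact (hK i hKi) (cfg i) (hcfg i) hr
    have hinv : ∀ i, InvC L x y (cfg i) := fun i => hInv i _ (hcfg i)
    have hdupstep : ∀ i, K ≤ i → GConf.dupOwned (cfg i) →
        mu L x y (cfg (i + 1)).pcm < mu L x y (cfg i).pcm := by
      intro i hKi hdup
      have hde : cfg (i + 1) = σ (cfg i) := hcons i _ _ (hcfg i) hdup (hcfg (i + 1))
      have hg := (hσspec (cfg i) ⟨_, hmv i⟩).2 hdup (hinv i)
      rcases hg.2 with hr | hlt
      · rw [← hde] at hr
        exact absurd hr (hrew (i + 1) (by omega))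
      · rw [hde]
        exact hlt
    have hspstep : ∀ i, K + 1 ≤ i → ¬ GConf.dupOwned (cfg i) →
        (cfg (i + 1)).pcm = (cfg i).pcm := by
      intro i hKi hsp
      rcases (hmv i).sp_no_reward hsp (hrew (i + 1) (by omega)) with hchn | hpcm
      · obtain ⟨j, rfl⟩ : ∃ j, i = j + 1 := ⟨i - 1, by omega⟩
        have hdprev : GConf.dupOwned (cfg j) := by
          have hflip := (hmv j).flip
          by_contra hc
          exact hsp (by rw [hflip]; exact hc)
        exact absurd hchn ((hmv j).dup_no_reward hdprev (hrew (j + 1) (by omega)))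
      · exact hpcm
    have htwostep : ∀ i, K + 1 ≤ i →
        mu L x y (cfg (i + 2)).pcm < mu L x y (cfg i).pcm := by
      intro i hKi
      by_cases hdup : GConf.dupOwned (cfg i)
      · have h1 := hdupstep i (by omega) hdup
        have hsp : ¬ GConf.dupOwned (cfg (i + 1)) := by
          rw [(hmv i).flip]
          exact fun hc => hc hdup
        have h2 := hspstep (i + 1) (by omega) hsp
        rw [show i + 1 + 1 = i + 2 by omega] at h2
        have h2' : mu L x y (cfg (i + 2)).pcm = mu L x y (cfg (i + 1)).pcm := by rw [h2]
        omega
      · have h2 := hspstep i hKi hdup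
        have hdup1 : GConf.dupOwned (cfg (i + 1)) := by
          rw [(hmv i).flip]
          exact hdup
        have h1 := hdupstep (i + 1) (by omega) hdup1
        rw [show i + 1 + 1 = i + 2 by omega] at h1
        have h2' : mu L x y (cfg (i + 1)).pcm = mu L x y (cfg i).pcm := by rw [h2]
        omega
    have hdesc : ∀ j, mu L x y (cfg (K + 1 + 2 * j)).pcm + j ≤
        mu L x y (cfg (K + 1)).pcm := by
      intro j
      induction j with
      | zero => simp
      | succ j ih =>
        have hts := htwostep (K + 1 + 2 * j) (by omega)
        have heq : K + 1 + 2 * (j + 1) = K + 1 + 2 * j + 2 := by omega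
        rw [heq]
        omega
    have := hdesc (mu L x y (cfg (K + 1)).pcm + 1)
    omega

variable {S : Type u} {A : Type v}

/-- Duplicator wins the given configuration of the `E(x,y)`-gb game. -/
def DWc (L : LTS S A) (x y : XY) (c : GConf S A) : Prop :=
  DupWins GConf.dupOwned (GMove L (Exy x y) Rw.check) (BuchiWin GConf.reward) c

def V1 (L : LTS S A) (x y : XY) (u v : S) : Prop :=
  ∃ r, DWc L x y (.sp (u, v) none none r)

def V2 (L : LTS S A) (x y : XY) (u v : S) : Prop :=
  ∃ a u' r, L.Trans u a u' ∧ DWc L x y (.sp (u, v) (some (a, u')) (some (v, .frown)) r)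

def V3 (L : LTS S A) (x y : XY) (u v : S) : Prop :=
  ∃ a r, DWc L x y (.sp (u, v) (some (a, u)) (some (v, .smile)) r)

def V (L : LTS S A) (x y : XY) (u v : S) : Prop :=
  V1 L x y u v ∨ V2 L x y u v ∨ V3 L x y u v

def Vhat (L : LTS S A) (x y : XY) (u v : S) : Prop :=
  V L x y u v ∨ V L x y v u

/-- Pressing: Duplicator follows `σ`, Spoiler repeats the current challenge. -/
def press (L : LTS S A) (x y : XY) (σ : GConf S A → GConf S A) : GConf S A → GConf S A
  | .dup p c m r => σ (.dup p c m r)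
  | .sp p (some ch) m _ => .dup p (some ch) m Rw.star
  | .sp p none m r => .sp p none m r

/-- A configuration in which the pressing phase has ended. -/
def isEnd : GConf S A → Prop
  | .sp _ none _ _ => True
  | _ => False

/-- Shapes occurring during a pressing phase. -/
inductive Shp : GConf S A → Prop
  | dup {p ch m r} : Shp (.dup p (some ch) (some m) r)
  | sp {p ch m r} : Shp (.sp p (some ch) (some m) r)

theorem eq_o_of_frown_mem {x y : XY} (h : Face.frown ∈ Exy x y) : x = XY.o := by
  rcases h with ⟨-, h⟩ | ⟨h, -⟩
  · exact h
  · cases h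

theorem eq_o_of_smile_mem {x y : XY} (h : Face.smile ∈ Exy x y) : y = XY.o := by
  rcases h with ⟨h, -⟩ | ⟨-, h⟩
  · cases h
  · exact h

variable {L : LTS S A} {x y : XY}

/-- Shorthand for `σ` winning from `c`. -/
abbrev Wn (L : LTS S A) (x y : XY) (σ : GConf S A → GConf S A) (c : GConf S A) : Prop :=
  WinsFrom GConf.dupOwned (GMove L (Exy x y) Rw.check) GConf.reward σ c

theorem press_step {σ : GConf S A → GConf S A}
    (hval : ValidStrategy GConf.dupOwned (GMove L (Exy x y) Rw.check) σ)
    {c : GConf S A} (hshp : Shp c) (hwin : Wn L x y σ c)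
    (hne : ¬ isEnd (press L x y σ c)) :
    GMove L (Exy x y) Rw.check c (press L x y σ c) ∧ Shp (press L x y σ c) ∧
      Wn L x y σ (press L x y σ c) ∧ ¬ GConf.reward (press L x y σ c) := by
  cases hshp with
  | @sp p ch m r =>
    have hmv : GMove L (Exy x y) Rw.check (.sp p (some ch) (some m) r)
        (.dup p (some ch) (some m) Rw.star) := by
      obtain ⟨p1, p2⟩ := p
      exact GMove.sp1 (by simp)
    exact ⟨hmv, .dup, hwin.of_move hmv (fun hd => absurd hd (by simp [GConf.dupOwned])),
      by simp [press, GConf.reward]⟩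
  | @dup p ch m r =>
    have hex : ∃ d, GMove L (Exy x y) Rw.check (.dup p (some ch) (some m) r) d := by
      by_contra hst
      push_neg at hst
      exact hwin.not_stuck (c := GConf.dup p (some ch) (some m) r) (by simp [GConf.dupOwned]) hst
    have hmv := hval (.dup p (some ch) (some m) r) (by simp [GConf.dupOwned]) hex
    have hwin' : Wn L x y σ (press L x y σ (.dup p (some ch) (some m) r)) :=
      hwin.of_move hmv (fun _ => rfl)
    refine ⟨hmv, ?_, hwin', ?_⟩
    · have hmv' : GMove L (Exy x y) Rw.check (.dup p (some ch) (some m) r)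
          (press L x y σ (.dup p (some ch) (some m) r)) := hmv
      generalize hgen : press L x y σ (.dup p (some ch) (some m) r) = d at hmv' hne ⊢
      cases hmv' with
      | dup1 => exact absurd trivial hne
      | dup2a h => exact .sp
      | dup2b h => exact absurd trivial hne
      | dup2c h hE => exact .sp
      | dup3a h => exact .sp
      | dup3b h => exact absurd trivial hne
      | dup3c h hE => exact .sp
    · have hmv' : GMove L (Exy x y) Rw.check (.dup p (some ch) (some m) r)
          (press L x y σ (.dup p (some ch) (some m) r)) := hmv
      generalize hgen : press L x y σ (.dup p (some ch) (some m) r) = d at hmv' hne ⊢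
      cases hmv' with
      | dup1 => exact absurd trivial hne
      | dup2a h => simp [GConf.reward]
      | dup2b h => exact absurd trivial hne
      | dup2c h hE => simp [GConf.reward]
      | dup3a h => simp [GConf.reward]
      | dup3b h => exact absurd trivial hne
      | dup3c h hE => simp [GConf.reward]

/-- The pressing phase terminates (by the Büchi condition). -/
theorem press_dup {σ : GConf S A → GConf S A} {c : GConf S A}
    (h : GConf.dupOwned c) : press L x y σ c = σ c := by
  cases c with
  | dup p cc m r => rfl
  | sp p cc m r => exact absurd h (by simp [GConf.dupOwned])

/-- The pressing phase terminates (by the Büchi condition). -/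
theorem press_term {σ : GConf S A → GConf S A}
    (hval : ValidStrategy GConf.dupOwned (GMove L (Exy x y) Rw.check) σ)
    {p : S × S} {ch : A × S} {mm : S × Face} {r : Rw}
    (hwin : Wn L x y σ (.dup p (some ch) (some mm) r)) :
    ∃ n, isEnd ((press L x y σ)^[n] (.dup p (some ch) (some mm) r)) := by
  by_contra hno
  push_neg at hno
  set D : GConf S A := .dup p (some ch) (some mm) r with hD
  set f : ℕ → GConf S A := fun n => (press L x y σ)^[n] D with hf
  have hsucc : ∀ k, f (k + 1) = press L x y σ (f k) := fun k => by
    rw [hf]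
    exact Function.iterate_succ_apply' _ _ _
  have hchain : ∀ n, Shp (f n) ∧ Wn L x y σ (f n) := by
    intro n
    induction n with
    | zero => exact ⟨.dup, hwin⟩
    | succ n ih =>
      have hps := press_step hval ih.1 ih.2 (by rw [← hsucc n]; exact hno (n + 1))
      rw [hsucc n]
      exact ⟨hps.2.1, hps.2.2.1⟩
  have hmvs : ∀ n, GMove L (Exy x y) Rw.check (f n) (f (n + 1)) ∧
      ¬ GConf.reward (f (n + 1)) := by
    intro n
    have hps := press_step hval (hchain n).1 (hchain n).2
      (by rw [← hsucc n]; exact hno (n + 1))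
    rw [hsucc n]
    exact ⟨hps.1, hps.2.2.2⟩
  set π : ℕ → Option (GConf S A) := fun n => some (f n) with hπ
  have hplay : IsPlay (GMove L (Exy x y) Rw.check) π := by
    refine ⟨?_, ?_, ?_⟩
    · intro i c d h1 h2
      cases h1; cases h2
      exact (hmvs i).1
    · intro i c h1 h2
      cases h2
    · intro i h1
      cases h1
  have hcons : ConsistentWith GConf.dupOwned σ π := by
    intro i c d h1 hdup h2
    cases h1; cases h2
    rw [hsucc i]
    exact press_dup hdup
  rcases hwin π hplay rfl hcons with ⟨e, ⟨i, h1, h2⟩, -⟩ | ⟨-, hbuchi⟩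
  · cases h2
  · obtain ⟨i, hi, c, hc, hrc⟩ := hbuchi 1
    cases hc
    obtain ⟨j, rfl⟩ : ∃ j, i = j + 1 := ⟨i - 1, by omega⟩
    exact (hmvs j).2 hrc

variable {S : Type u} {A : Type v} {L : LTS S A} {x y : XY}

theorem end_shift {σ : GConf S A → GConf S A} {n : ℕ} {D : GConf S A}
    {p : S × S} {ch : A × S} {mm : S × Face} {r' : Rw}
    (hpress : press L x y σ D = GConf.sp p (some ch) (some mm) r')
    (hD : ¬ isEnd D) (hend : isEnd ((press L x y σ)^[n] D)) :
    ∃ m, m < n ∧ isEnd ((press L x y σ)^[m] (GConf.dup p (some ch) (some mm) Rw.star)) := by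
  rcases n with _ | _ | m
  · exact absurd (by simpa using hend) hD
  · exfalso
    have h1 : (press L x y σ)^[1] D = GConf.sp p (some ch) (some mm) r' := by
      simpa using hpress
    rw [h1] at hend
    simp [isEnd] at hend
  · refine ⟨m, by omega, ?_⟩
    have h2 : (press L x y σ)^[m + 2] D
        = (press L x y σ)^[m] (press L x y σ (press L x y σ D)) := by
      rw [show m + 2 = m + 1 + 1 by omega, Function.iterate_succ_apply,
        Function.iterate_succ_apply]
    rw [h2, hpress] at hend
    simpa only [press] using hend

/-- Extraction from a winning smile configuration of Duplicator. -/
theorem extract_smile {σ : GConf S A → GConf S A}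
    (hval : ValidStrategy GConf.dupOwned (GMove L (Exy x y) Rw.check) σ)
    {a : A} {u₂ : S} :
    ∀ n : ℕ, ∀ (P : S × S) (w : S) (r : Rw),
      Wn L x y σ (.dup P (some (a, u₂)) (some (w, .smile)) r) →
      isEnd ((press L x y σ)^[n] (.dup P (some (a, u₂)) (some (w, .smile)) r)) →
      ∃ t', L.TauStar w t' ∧ V1 L x y u₂ t' := by
  intro n
  induction n using Nat.strong_induction_on with
  | _ n ih =>
    intro P w r hwin hend
    obtain ⟨P1, P2⟩ := P
    have hex : ∃ d, GMove L (Exy x y) Rw.check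
        (GConf.dup (P1, P2) (some (a, u₂)) (some (w, .smile)) r) d := by
      by_contra hst
      push_neg at hst
      exact hwin.not_stuck (by simp [GConf.dupOwned]) hst
    have hmv := hval _ (by simp [GConf.dupOwned]) hex
    have hwd : Wn L x y σ (σ (GConf.dup (P1, P2) (some (a, u₂)) (some (w, .smile)) r)) :=
      hwin.of_move hmv (fun _ => rfl)
    have hpress : press L x y σ (GConf.dup (P1, P2) (some (a, u₂)) (some (w, .smile)) r)
        = σ (GConf.dup (P1, P2) (some (a, u₂)) (some (w, .smile)) r) := rfl
    generalize hgd : σ (GConf.dup (P1, P2) (some (a, u₂)) (some (w, .smile)) r) = d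
      at hmv hwd hpress
    have hDne : ¬ isEnd (GConf.dup (P1, P2) (some (a, u₂)) (some (w, .smile)) r) := by
      simp [isEnd]
    cases hmv with
    | dup1 =>
      exact ⟨w, .refl, Rw.check, σ, hval, hwd⟩
    | @dup3a _ _ _ _ _ _ w' _ h =>
      obtain ⟨m, hm, hend'⟩ := end_shift hpress hDne hend
      have hw2 : Wn L x y σ (GConf.dup (P1, w') (some (a, u₂)) (some (w', .smile)) Rw.star) :=
        hwd.of_move (GMove.sp1 (by simp)) (fun hd => absurd hd (by simp [GConf.dupOwned]))
      obtain ⟨t', hp, hv⟩ := ih m hm _ _ _ hw2 hend'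
      exact ⟨t', Relation.ReflTransGen.head h hp, hv⟩
    | @dup3b _ _ _ _ _ w' _ h =>
      exact ⟨w', Relation.ReflTransGen.single h, Rw.check, σ, hval, hwd⟩
    | @dup3c _ _ _ _ _ _ w' _ h hE =>
      obtain ⟨m, hm, hend'⟩ := end_shift hpress hDne hend
      have hw2 : Wn L x y σ (GConf.dup (P1, P2) (some (a, u₂)) (some (w', .smile)) Rw.star) :=
        hwd.of_move (GMove.sp1 (by simp)) (fun hd => absurd hd (by simp [GConf.dupOwned]))
      obtain ⟨t', hp, hv⟩ := ih m hm _ _ _ hw2 hend'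
      exact ⟨t', Relation.ReflTransGen.head h hp, hv⟩

variable {S : Type u} {A : Type v} {L : LTS S A} {x y : XY}

/-- Extraction from a winning frown configuration of Duplicator. -/
theorem extract_frown {σ : GConf S A → GConf S A}
    (hval : ValidStrategy GConf.dupOwned (GMove L (Exy x y) Rw.check) σ)
    {b : A} {u₂ p₁ : S} (htr : L.Trans p₁ b u₂) :
    ∀ n : ℕ, ∀ (p₂ w : S) (r : Rw),
      Wn L x y σ (.dup (p₁, p₂) (some (b, u₂)) (some (w, .frown)) r) →
      isEnd ((press L x y σ)^[n] (.dup (p₁, p₂) (some (b, u₂)) (some (w, .frown)) r)) →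
      (b = L.tau ∧ V1 L x y u₂ w) ∨
      ∃ t1 t2 t', L.TauStar w t1 ∧ L.Trans t1 b t2 ∧ L.TauStar t2 t' ∧ V L x y u₂ t' ∧
        (x = XY.b → (t1 = w ∨ V L x y p₁ t1)) ∧ (y = XY.b → V L x y u₂ t2) := by
  intro n
  induction n using Nat.strong_induction_on with
  | _ n ih =>
    intro p₂ w r hwin hend
    have hex : ∃ d, GMove L (Exy x y) Rw.check
        (GConf.dup (p₁, p₂) (some (b, u₂)) (some (w, .frown)) r) d := by
      by_contra hst
      push_neg at hst
      exact hwin.not_stuck (by simp [GConf.dupOwned]) hst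
    have hmv := hval _ (by simp [GConf.dupOwned]) hex
    have hwd : Wn L x y σ (σ (GConf.dup (p₁, p₂) (some (b, u₂)) (some (w, .frown)) r)) :=
      hwin.of_move hmv (fun _ => rfl)
    have hpress : press L x y σ (GConf.dup (p₁, p₂) (some (b, u₂)) (some (w, .frown)) r)
        = σ (GConf.dup (p₁, p₂) (some (b, u₂)) (some (w, .frown)) r) := rfl
    generalize hgd : σ (GConf.dup (p₁, p₂) (some (b, u₂)) (some (w, .frown)) r) = d
      at hmv hwd hpress
    have hDne : ¬ isEnd (GConf.dup (p₁, p₂) (some (b, u₂)) (some (w, .frown)) r) := by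
      simp [isEnd]
    cases hmv with
    | dup1 =>
      exact Or.inl ⟨rfl, Rw.check, σ, hval, hwd⟩
    | @dup2a _ _ _ _ _ t2 _ h =>
      -- target: ⟨(u₂,t2),(b,u₂),(t2,☺),*⟩, a winning smile configuration
      have hv3 : V3 L x y u₂ t2 := ⟨b, Rw.star, σ, hval, hwd⟩
      obtain ⟨m, hm, hend'⟩ := end_shift hpress hDne hend
      have hw2 : Wn L x y σ (GConf.dup (u₂, t2) (some (b, u₂)) (some (t2, .smile)) Rw.star) :=
        hwd.of_move (GMove.sp1 (by simp)) (fun hd => absurd hd (by simp [GConf.dupOwned]))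
      obtain ⟨t', hp, hv1⟩ := extract_smile hval m _ _ _ hw2 hend'
      exact Or.inr ⟨w, t2, t', .refl, h, hp, Or.inl hv1, fun _ => Or.inl rfl,
        fun _ => Or.inr (Or.inr hv3)⟩
    | @dup2b _ _ _ _ _ t2 _ h =>
      have hv1 : V1 L x y u₂ t2 := ⟨Rw.check, σ, hval, hwd⟩
      exact Or.inr ⟨w, t2, t2, .refl, h, .refl, Or.inl hv1, fun _ => Or.inl rfl,
        fun _ => Or.inl hv1⟩
    | @dup2c _ _ _ _ _ v' _ h hE =>
      obtain ⟨m, hm, hend'⟩ := end_shift hpress hDne hend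
      have hw2 : Wn L x y σ (GConf.dup (p₁, p₂) (some (b, u₂)) (some (v', .smile)) Rw.star) :=
        hwd.of_move (GMove.sp1 (by simp)) (fun hd => absurd hd (by simp [GConf.dupOwned]))
      obtain ⟨t', hp, hv1⟩ := extract_smile hval m _ _ _ hw2 hend'
      exact Or.inr ⟨w, v', t', .refl, h, hp, Or.inl hv1, fun _ => Or.inl rfl,
        fun hyb => absurd ((eq_o_of_smile_mem hE).symm.trans hyb) (by simp)⟩
    | @dup3a _ _ _ _ _ _ w' _ h =>
      have hv2 : V2 L x y p₁ w' := ⟨b, u₂, Rw.star, htr, σ, hval, hwd⟩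
      obtain ⟨m, hm, hend'⟩ := end_shift hpress hDne hend
      have hw2 : Wn L x y σ (GConf.dup (p₁, w') (some (b, u₂)) (some (w', .frown)) Rw.star) :=
        hwd.of_move (GMove.sp1 (by simp)) (fun hd => absurd hd (by simp [GConf.dupOwned]))
      rcases ih m hm _ _ _ hw2 hend' with ⟨hb, hv1⟩ | ⟨t1, t2, t', hp1, htr1, hp2, hv, hx, hy⟩
      · refine Or.inr ⟨w, w', w', .refl, ?_, .refl, Or.inl hv1, fun _ => Or.inl rfl,
          fun _ => Or.inl hv1⟩
        rw [hb]
        exact h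
      · refine Or.inr ⟨t1, t2, t', Relation.ReflTransGen.head h hp1, htr1, hp2, hv,
          fun hxb => ?_, hy⟩
        rcases hx hxb with rfl | hvv
        · exact Or.inr (Or.inr (Or.inl hv2))
        · exact Or.inr hvv
    | @dup3c _ _ _ _ _ _ w' _ h hE =>
      obtain ⟨m, hm, hend'⟩ := end_shift hpress hDne hend
      have hw2 : Wn L x y σ (GConf.dup (p₁, p₂) (some (b, u₂)) (some (w', .frown)) Rw.star) :=
        hwd.of_move (GMove.sp1 (by simp)) (fun hd => absurd hd (by simp [GConf.dupOwned]))
      rcases ih m hm _ _ _ hw2 hend' with ⟨hb, hv1⟩ | ⟨t1, t2, t', hp1, htr1, hp2, hv, hx, hy⟩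
      · refine Or.inr ⟨w, w', w', .refl, ?_, .refl, Or.inl hv1, fun _ => Or.inl rfl,
          fun _ => Or.inl hv1⟩
        rw [hb]
        exact h
      · exact Or.inr ⟨t1, t2, t', Relation.ReflTransGen.head h hp1, htr1, hp2, hv,
          fun hxb => absurd ((eq_o_of_frown_mem hE).symm.trans hxb) (by simp), hy⟩

variable {S : Type u} {A : Type v} {L : LTS S A} {x y : XY}

theorem frown_conclusion {σ : GConf S A → GConf S A}
    (hval : ValidStrategy GConf.dupOwned (GMove L (Exy x y) Rw.check) σ)
    {b : A} {u₂ p₁ p₂ : S} {r : Rw} (htr : L.Trans p₁ b u₂)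
    (hw : Wn L x y σ (.dup (p₁, p₂) (some (b, u₂)) (some (p₂, .frown)) r))
    (hpair : Vhat L x y p₁ p₂) :
    (b = L.tau ∧ Vhat L x y u₂ p₂) ∨
    ∃ t1 t2 t', L.GenTauStar x (Vhat L x y) p₁ p₂ t1 ∧ L.Trans t1 b t2 ∧
      L.GenTauStar y (Vhat L x y) u₂ t2 t' ∧ Vhat L x y u₂ t' := by
  obtain ⟨n, hend⟩ := press_term hval hw
  rcases extract_frown hval htr n p₂ p₂ r hw hend with ⟨hb, hv1⟩ |
    ⟨t1, t2, t', hp1, htr1, hp2, hv, hx, hy⟩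
  · exact Or.inl ⟨hb, Or.inl (Or.inl hv1)⟩
  · refine Or.inr ⟨t1, t2, t', ⟨hp1, fun hxb => ⟨hpair, ?_⟩⟩, htr1,
      ⟨hp2, fun hyb => ⟨Or.inl (hy hyb), Or.inl hv⟩⟩, Or.inl hv⟩
    rcases hx hxb with rfl | hv'
    · exact hpair
    · exact Or.inl hv'

theorem V_spconf {t s : S} (h : V L x y t s) :
    ∃ cc mm r, DWc L x y (.sp (t, s) cc mm r) := by
  rcases h with ⟨r, hw⟩ | ⟨a, u', r, -, hw⟩ | ⟨a, r, hw⟩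
  · exact ⟨none, none, r, hw⟩
  · exact ⟨some (a, u'), some (s, .frown), r, hw⟩
  · exact ⟨some (a, t), some (s, .smile), r, hw⟩

theorem isGenBisim_Vhat : L.IsGenBisim x y (Vhat L x y) := by
  constructor
  · rintro s t (h | h)
    · exact Or.inr h
    · exact Or.inl h
  · rintro s t a s' hst htr
    rcases hst with hv | hv
    · rcases hv with ⟨r, σ, hval, hw⟩ | ⟨a₀, u₀, r, htr₀, σ, hval, hw⟩ | ⟨a₀, r, σ, hval, hw⟩
      · -- V1: fresh challenge via sp2a
        have hw2 : Wn L x y σ (.dup (s, t) (some (a, s')) (some (t, .frown)) Rw.star) :=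
          WinsFrom.of_move hw (GMove.sp2a htr) (fun hd => absurd hd (by simp [GConf.dupOwned]))
        exact frown_conclusion hval htr hw2 (Or.inl (Or.inl ⟨r, σ, hval, hw⟩))
      · -- V2
        have hpair : Vhat L x y s t :=
          Or.inl (Or.inr (Or.inl ⟨a₀, u₀, r, htr₀, σ, hval, hw⟩))
        by_cases heq : (some (a₀, u₀) : Option (A × S)) = some (a, s')
        · rw [heq] at hw
          have hw2 : Wn L x y σ (.dup (s, t) (some (a, s')) (some (t, .frown)) Rw.star) :=
            WinsFrom.of_move hw (GMove.sp1 (by simp)) (fun hd => absurd hd (by simp [GConf.dupOwned]))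
          exact frown_conclusion hval htr hw2 hpair
        · have hw2 : Wn L x y σ (.dup (s, t) (some (a, s')) (some (t, .frown)) Rw.check) :=
            WinsFrom.of_move hw (GMove.sp2b htr heq) (fun hd => absurd hd (by simp [GConf.dupOwned]))
          exact frown_conclusion hval htr hw2 hpair
      · -- V3
        have hpair : Vhat L x y s t := Or.inl (Or.inr (Or.inr ⟨a₀, r, σ, hval, hw⟩))
        by_cases heq : (some (a₀, s) : Option (A × S)) = some (a, s')
        · -- the repeated-challenge corner: a₀ = a and s' = s
          have ha₀ : a₀ = a := by
            injection heq with h'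
            exact congrArg Prod.fst h'
          have hs' : s' = s := by
            injection heq with h'
            exact (congrArg Prod.snd h').symm
          rw [ha₀] at hw
          rw [hs'] at htr ⊢
          by_cases hb : a = L.tau
          · exact Or.inl ⟨hb, hpair⟩
          · -- press through the smile phase first
            have hw2 : Wn L x y σ (.dup (s, t) (some (a, s)) (some (t, .smile)) Rw.star) :=
              WinsFrom.of_move hw (GMove.sp1 (by simp)) (fun hd => absurd hd (by simp [GConf.dupOwned]))
            obtain ⟨n, hend⟩ := press_term hval hw2
            obtain ⟨t'', hp, r'', σ₂, hval₂, hw₃⟩ := extract_smile hval n _ _ _ hw2 hend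
            have hw4 : Wn L x y σ₂
                (.dup (s, t'') (some (a, s)) (some (t'', .frown)) Rw.star) :=
              WinsFrom.of_move hw₃ (GMove.sp2a htr) (fun hd => absurd hd (by simp [GConf.dupOwned]))
            obtain ⟨n', hend'⟩ := press_term hval₂ hw4
            rcases extract_frown hval₂ htr n' t'' t'' Rw.star hw4 hend' with ⟨hb', -⟩ |
              ⟨t1, t2, t3, hp1, htr1, hp2, hvv, hx, hy⟩
            · exact absurd hb' hb
            · refine Or.inr ⟨t1, t2, t3, ⟨hp.trans hp1, fun hxb => ⟨hpair, ?_⟩⟩, htr1,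
                ⟨hp2, fun hyb => ⟨Or.inl (hy hyb), Or.inl hvv⟩⟩, Or.inl hvv⟩
              rcases hx hxb with rfl | hv'
              · exact Or.inl (Or.inl ⟨r'', σ₂, hval₂, hw₃⟩)
              · exact Or.inl hv'
        · have hw2 : Wn L x y σ (.dup (s, t) (some (a, s')) (some (t, .frown)) Rw.check) :=
            WinsFrom.of_move hw (GMove.sp2b htr heq) (fun hd => absurd hd (by simp [GConf.dupOwned]))
          exact frown_conclusion hval htr hw2 hpair
    · -- the symmetric case: a winning configuration with pair (t, s); use sp3
      obtain ⟨cc, mm, r, σ, hval, hw⟩ := V_spconf hv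
      have hw2 : Wn L x y σ (.dup (s, t) (some (a, s')) (some (t, .frown)) Rw.check) :=
        WinsFrom.of_move hw (GMove.sp3 htr) (fun hd => absurd hd (by simp [GConf.dupOwned]))
      exact frown_conclusion hval htr hw2 (Or.inr hv)

/-- Game characterisation of generic bisimilarity:
`s ≈_{(x,y)} t` iff `s ≡_{E(x,y)} t`. -/
theorem genBisimilar_iff_gbEquiv {S : Type u} {A : Type v} (L : LTS S A)
    (x y : XY) (s t : S) :
    L.GenBisimilar x y s t ↔ L.gbEquiv (Exy x y) s t := by
  constructor
  · intro h
    exact sb_gbEquiv (genBisimilar_sb h)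
  · intro h
    exact ⟨Vhat L x y, isGenBisim_Vhat, Or.inl (Or.inl ⟨Rw.star, h⟩)⟩
end GamesBisim
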